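/- For all d ≥ 2 and all k ≥ 1, the optimal stretches satisfy Δ'_d(⌈k/2⌉) ≤ Δ_d(k) ≤ Δ'_d(k). -/

import Mathlib

open scoped BigOperators ENNReal

noncomputable section

/-- The projection `π : ℝ^d → ℝ^{d−1}` forgetting the last coordinate. -/
def proj {d : ℕ} (x : EuclideanSpace ℝ (Fin d)) : EuclideanSpace ℝ (Fin (d - 1)) :=
  WithLp.toLp 2 (fun i => x (Fin.castLE (Nat.sub_le d 1) i))

/-- The height `h(x) = x_d`, the last coordinate of `x ∈ ℝ^d` (junk value `0` for `d = 0`). -/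
def hCoord {d : ℕ} (x : EuclideanSpace ℝ (Fin d)) : ℝ :=
  if h : 0 < d then x ⟨d - 1, by omega⟩ else 0

/-- The first coordinate of `x ∈ ℝ^d` (junk value `0` for `d = 0`). -/
def firstCoord {d : ℕ} (x : EuclideanSpace ℝ (Fin d)) : ℝ :=
  if h : 0 < d then x ⟨0, h⟩ else 0

/-- A set `Q ⊆ ℝ^m` is in affinely general position if any `m+1` of its points are
affinely independent. -/
def AffGenPos {m : ℕ} (Q : Set (EuclideanSpace ℝ (Fin m))) : Prop :=
  ∀ s : Finset (EuclideanSpace ℝ (Fin m)), ↑s ⊆ Q → s.card = m + 1 →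
    AffineIndependent ℝ (fun x : s => (x : EuclideanSpace ℝ (Fin m)))

/-- A set `Q ⊆ ℝ^d` is convex independent if it is in general position and no point of `Q`
lies in the convex hull of the other points of `Q`. -/
def ConvIndep {d : ℕ} (Q : Set (EuclideanSpace ℝ (Fin d))) : Prop :=
  AffGenPos Q ∧ ∀ q ∈ Q, q ∉ convexHull ℝ (Q \ {q})

/-- A finite set `P ⊆ ℝ^d` is regular if (R1) the projection of `P` to each coordinate axis is
injective; (R2) `π(P)` is in affinely general position in `ℝ^{d−1}`; (R3) for every generic pair
`(S, T)` of `P` (disjoint nonempty subsets with `|S| + |T| = d + 1`), the affine spans of `π(S)`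
and `π(T)` intersect in exactly one point. -/
def Regular {d : ℕ} (P : Set (EuclideanSpace ℝ (Fin d))) : Prop :=
  (∀ i : Fin d, Set.InjOn (fun p : EuclideanSpace ℝ (Fin d) => p i) P) ∧
  AffGenPos (proj '' P) ∧
  (∀ S T : Finset (EuclideanSpace ℝ (Fin d)), ↑S ⊆ P → ↑T ⊆ P → Disjoint S T →
    S.Nonempty → T.Nonempty → S.card + T.card = d + 1 →
    ∃! q : EuclideanSpace ℝ (Fin (d - 1)),
      q ∈ affineSpan ℝ (proj '' (S : Set (EuclideanSpace ℝ (Fin d)))) ∧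
      q ∈ affineSpan ℝ (proj '' (T : Set (EuclideanSpace ℝ (Fin d)))))

/-- `A` is high above `B` if `A`, `B` are disjoint, `A ∪ B` is regular, and for every generic pair
`(S, T)` of `A ∪ B` with `S ⊆ A`, `T ⊆ B`, the points `s ∈ aff S`, `t ∈ aff T` with
`π(s) = π(t)` satisfy `h(s) > h(t)`. -/
def HighAbove {d : ℕ} (A B : Set (EuclideanSpace ℝ (Fin d))) : Prop :=
  Disjoint A B ∧ Regular (A ∪ B) ∧
  ∀ S T : Finset (EuclideanSpace ℝ (Fin d)), ↑S ⊆ A → ↑T ⊆ B →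
    S.Nonempty → T.Nonempty → S.card + T.card = d + 1 →
    ∀ s t : EuclideanSpace ℝ (Fin d),
      s ∈ affineSpan ℝ (S : Set (EuclideanSpace ℝ (Fin d))) →
      t ∈ affineSpan ℝ (T : Set (EuclideanSpace ℝ (Fin d))) →
      proj s = proj t → hCoord t < hCoord s

/-- A regular set `P ⊆ ℝ^d` is a convex cup if whenever `p, p₁, …, p_d ∈ P` are distinct points
with `π(p) = ∑ cᵢ π(pᵢ)`, all `cᵢ ∈ (0,1)` and `∑ cᵢ = 1`, then `h(p) < ∑ cᵢ h(pᵢ)`. -/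
def ConvexCup {d : ℕ} (P : Set (EuclideanSpace ℝ (Fin d))) : Prop :=
  Regular P ∧
  ∀ (p : EuclideanSpace ℝ (Fin d)) (q : Fin d → EuclideanSpace ℝ (Fin d)) (c : Fin d → ℝ),
    p ∈ P → (∀ i, q i ∈ P) → Function.Injective q → (∀ i, p ≠ q i) →
    (∀ i, c i ∈ Set.Ioo (0 : ℝ) 1) → ∑ i, c i = 1 →
    proj p = ∑ i, c i • proj (q i) →
    hCoord p < ∑ i, c i * hCoord (q i)

/-- A regular set `P ⊆ ℝ^d` is a convex cap if whenever `p, p₁, …, p_d ∈ P` are distinct points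
with `π(p) = ∑ cᵢ π(pᵢ)`, all `cᵢ ∈ (0,1)` and `∑ cᵢ = 1`, then `h(p) > ∑ cᵢ h(pᵢ)`. -/
def ConvexCap {d : ℕ} (P : Set (EuclideanSpace ℝ (Fin d))) : Prop :=
  Regular P ∧
  ∀ (p : EuclideanSpace ℝ (Fin d)) (q : Fin d → EuclideanSpace ℝ (Fin d)) (c : Fin d → ℝ),
    p ∈ P → (∀ i, q i ∈ P) → Function.Injective q → (∀ i, p ≠ q i) →
    (∀ i, c i ∈ Set.Ioo (0 : ℝ) 1) → ∑ i, c i = 1 →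
    proj p = ∑ i, c i • proj (q i) →
    ∑ i, c i * hCoord (q i) < hCoord p

/-- `∂_π P`, the set of points of `P` whose projection does not lie in the interior of the
convex hull of `π(P)`. -/
def piBoundary {d : ℕ} (P : Set (EuclideanSpace ℝ (Fin d))) : Set (EuclideanSpace ℝ (Fin d)) :=
  {p ∈ P | proj p ∉ interior (convexHull ℝ (proj '' P))}

/-- The rank of `p` in `P`: the number of points of `P` whose first coordinate is at most that
of `p`.  If `P` is sorted as `p₁, p₂, …` by strictly increasing first coordinate, then
`rank P pₜ = t`. -/
def rank {d : ℕ} (P : Set (EuclideanSpace ℝ (Fin d))) (p : EuclideanSpace ℝ (Fin d)) : ℕ :=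
  Set.ncard {q ∈ P | firstCoord q ≤ firstCoord p}

/-- The subset `P_{a,b} = {p_t ∈ P : t ≡ a (mod b)}` of `P` (sorted by first coordinate). -/
def modClass {d : ℕ} (a b : ℕ) (P : Set (EuclideanSpace ℝ (Fin d))) :
    Set (EuclideanSpace ℝ (Fin d)) :=
  {p ∈ P | rank P p % b = a % b}

/-- `d`-oscillators, defined recursively: (O1) any one-point set, and any finite subset of `ℝ¹`,
is an oscillator; (O2) for `d ≥ 2` a finite set `P` with `|P| ≥ 2` is a `d`-oscillator if it is
regular, both `P_{1,2}` and `P_{2,2}` are `d`-oscillators, one of `P_{1,2}`, `P_{2,2}` is high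
above the other, and `π(P)` is a `(d−1)`-oscillator. -/
inductive IsOscillator : (d : ℕ) → Set (EuclideanSpace ℝ (Fin d)) → Prop
  | single {d : ℕ} (p : EuclideanSpace ℝ (Fin d)) : IsOscillator d {p}
  | dimOne (P : Set (EuclideanSpace ℝ (Fin 1))) (hfin : P.Finite) : IsOscillator 1 P
  | step {d : ℕ} (P : Set (EuclideanSpace ℝ (Fin d))) (hd : 2 ≤ d) (hfin : P.Finite)
      (hcard : 2 ≤ P.ncard) (hreg : Regular P)
      (h1 : IsOscillator d (modClass 1 2 P))
      (h2 : IsOscillator d (modClass 2 2 P))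
      (hab : HighAbove (modClass 1 2 P) (modClass 2 2 P) ∨
        HighAbove (modClass 2 2 P) (modClass 1 2 P))
      (hproj : IsOscillator (d - 1) (proj '' P)) : IsOscillator d P

/-- A finite set `P ⊆ ℝ^d` is generic if for any disjoint nonempty subsets `S, T` of `P` with
`|S| + |T| = d + 2`, the affine spans of `S` and `T` intersect in exactly one point. -/
def GenericSet {d : ℕ} (P : Set (EuclideanSpace ℝ (Fin d))) : Prop :=
  ∀ S T : Finset (EuclideanSpace ℝ (Fin d)), ↑S ⊆ P → ↑T ⊆ P → Disjoint S T →
    S.Nonempty → T.Nonempty → S.card + T.card = d + 2 →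
    ∃! x : EuclideanSpace ℝ (Fin d),
      x ∈ affineSpan ℝ (S : Set (EuclideanSpace ℝ (Fin d))) ∧
      x ∈ affineSpan ℝ (T : Set (EuclideanSpace ℝ (Fin d)))

/-- The point of `ℝ^d` obtained from `y ∈ ℝ^{d−1}` by appending a last coordinate `t`. -/
def lift {d : ℕ} (y : EuclideanSpace ℝ (Fin (d - 1))) (t : ℝ) : EuclideanSpace ℝ (Fin d) :=
  WithLp.toLp 2 (fun i : Fin d => if h : (i : ℕ) < d - 1 then y ⟨i, h⟩ else t)

/-- `(N)_ε = ∑_{k≥0} a_k ε^{k+1}` where `N = ∑_{k≥0} a_k 2^k` is the binary expansion of `N`. -/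
def binRep (ε : ℝ) (N : ℕ) : ℝ :=
  ∑ k ∈ Finset.range (N + 1), if N.testBit k then ε ^ (k + 1) else 0

/-- The stretch `str_P(C) = i_k − i_1` of a subset `C` of a `d`-oscillator `P` (sorted by first
coordinate), where `i_1 < … < i_k` are the indices of the elements of `C` in `P`. -/
def stretch {d : ℕ} (P C : Set (EuclideanSpace ℝ (Fin d))) : ℕ :=
  sSup (rank P '' C) - sInf (rank P '' C)

/-- `Δ_d(k)`: the minimum stretch `str_P(C)` over all finite `d`-oscillators `P` and all
`k`-point convex independent subsets `C ⊆ P` (`= ∞` if there are none). -/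
def Delta (d k : ℕ) : ℝ≥0∞ :=
  sInf {s : ℝ≥0∞ | ∃ P C : Set (EuclideanSpace ℝ (Fin d)),
    IsOscillator d P ∧ C ⊆ P ∧ ConvIndep C ∧ C.ncard = k ∧ s = (stretch P C : ℝ≥0∞)}

/-- `Δ'_d(k)`: the minimum stretch `str_P(C)` over all finite `d`-oscillators `P` and all
`k`-point subsets `C ⊆ P` that are convex cups or convex caps (`= ∞` if there are none). -/
def Delta' (d k : ℕ) : ℝ≥0∞ :=
  sInf {s : ℝ≥0∞ | ∃ P C : Set (EuclideanSpace ℝ (Fin d)),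
    IsOscillator d P ∧ C ⊆ P ∧ (ConvexCup C ∨ ConvexCap C) ∧ C.ncard = k ∧
      s = (stretch P C : ℝ≥0∞)}

/-!
Both inequalities compare a convex independent set with a cup or cap inside the same
oscillator, and stretch is monotone under inclusion.

A cup or cap `C` in an oscillator is convex independent. By induction along the recursive
definition (one half lies high above the other, and the projection is again an oscillator),
an oscillator and its projection are in general position. So if `p ∈ conv (C \ {p})`, then `p`
is interior to a `d`-simplex of `C`. The `d + 1` projected vertices satisfy an affine relation,
and sliding the barycentric weights of `p` along it in either direction until a weight vanishes
gives interpolations of `π p` by `d` points of `C` that lie strictly below and strictly above `p`.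

Conversely, every point of a convex independent `C` is an extreme point of `conv C`, so it is the
lowest or the highest point of its vertical fibre. The lowest points form a cup, the highest
points a cap, and one of the two contains at least `⌈k/2⌉` points.
-/

local notation "ℝ^" n:max => EuclideanSpace ℝ (Fin n)

section Spans

variable {ι V : Type*} [AddCommGroup V] [Module ℝ V]

theorem sum_smul_mem_vectorSpan_image (s : Finset ι) (f : ι → V) {w : ι → ℝ}
    (hw : ∑ i ∈ s, w i = 0) : ∑ i ∈ s, w i • f i ∈ vectorSpan ℝ (f '' s) := by
  rcases s.eq_empty_or_nonempty with rfl | ⟨i₀, hi₀⟩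
  · simp
  have : ∑ i ∈ s, w i • f i = ∑ i ∈ s, w i • (f i -ᵥ f i₀) := by
    simp [smul_sub, Finset.sum_sub_distrib, ← Finset.sum_smul, hw]
  rw [this]
  exact Submodule.sum_mem _ fun i hi => Submodule.smul_mem _ _
    (vsub_mem_vectorSpan ℝ (Set.mem_image_of_mem f hi) (Set.mem_image_of_mem f hi₀))

theorem sum_smul_mem_affineSpan_image (s : Finset ι) (f : ι → V) {w : ι → ℝ}
    (hw : ∑ i ∈ s, w i = 1) : ∑ i ∈ s, w i • f i ∈ affineSpan ℝ (f '' s) := by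
  rw [← s.affineCombination_eq_linear_combination f w hw]
  exact affineCombination_mem_affineSpan_image hw (fun i hi h => absurd hi h) f

theorem eq_zero_of_mem_direction_of_existsUnique {E₁ E₂ : AffineSubspace ℝ V}
    (h : ∃! q, q ∈ E₁ ∧ q ∈ E₂) {v : V} (h₁ : v ∈ E₁.direction) (h₂ : v ∈ E₂.direction) :
    v = 0 := by
  obtain ⟨q, ⟨hq₁, hq₂⟩, huniq⟩ := h
  have : v +ᵥ q = q := huniq _ ⟨AffineSubspace.vadd_mem_of_mem_direction h₁ hq₁,
    AffineSubspace.vadd_mem_of_mem_direction h₂ hq₂⟩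
  simpa using this

end Spans

theorem exists_sub_mul_nonneg_eq_zero {ι : Type*} [Fintype ι] {w b : ι → ℝ}
    (hw : ∀ i, 0 < w i) (hb : ∑ i, b i = 0) (hb' : ∃ i, b i ≠ 0) :
    ∃ t > 0, ∃ i₀, (∀ i, 0 ≤ w i - t * b i) ∧ w i₀ - t * b i₀ = 0 := by
  classical
  obtain ⟨j, -, hj⟩ := Finset.exists_pos_of_sum_zero_of_exists_nonzero b hb (by simpa using hb')
  obtain ⟨i₀, hi₀, hmin⟩ := (Finset.univ.filter (0 < b ·)).exists_min_image (fun i => w i / b i)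
    ⟨j, by simpa using hj⟩
  have hb₀ : 0 < b i₀ := (Finset.mem_filter.mp hi₀).2
  refine ⟨w i₀ / b i₀, div_pos (hw i₀) hb₀, i₀, fun i => ?_, by field_simp; ring⟩
  rcases lt_or_ge 0 (b i) with hbi | hbi
  · have := (le_div_iff₀ hbi).mp (hmin i (by simpa using hbi))
    linarith
  · nlinarith [hw i, div_pos (hw i₀) hb₀]

theorem mem_convexHull_sdiff_of_mem_openSegment {E : Type*} [AddCommGroup E] [Module ℝ E]
    {C : Set E} {p x y : E} (hx : x ∈ convexHull ℝ C) (hy : y ∈ convexHull ℝ C) (hxp : x ≠ p)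
    (hyp : y ≠ p) (hp : p ∈ openSegment ℝ x y) : p ∈ convexHull ℝ (C \ {p}) := by
  rcases (C \ {p}).eq_empty_or_nonempty with hC | hC
  · rw [Set.sdiff_eq_empty] at hC
    exact absurd (convexHull_mono hC hx) (by simpa using hxp)
  have hjoin : convexHull ℝ C ⊆ convexJoin ℝ {p} (convexHull ℝ (C \ {p})) :=
    (convexHull_mono (Set.subset_insert_sdiff_singleton p C)).trans (convexHull_insert hC).le
  -- `x` and `y` lie on segments from `p` to points `x'`, `y'` of `conv (C \ {p})`, and `p` is a
  -- positive combination of `x'` and `y'`.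
  obtain ⟨_, hp₁, x', hx', hxx'⟩ := mem_convexJoin.mp (hjoin hx)
  obtain ⟨_, hp₂, y', hy', hyy'⟩ := mem_convexJoin.mp (hjoin hy)
  rw [Set.mem_singleton_iff.mp hp₁, segment_eq_image'] at hxx'
  rw [Set.mem_singleton_iff.mp hp₂, segment_eq_image'] at hyy'
  obtain ⟨α, ⟨hα₀, -⟩, rfl⟩ := hxx'
  obtain ⟨β, ⟨hβ₀, -⟩, rfl⟩ := hyy'
  rw [openSegment_eq_image'] at hp
  obtain ⟨t, ⟨ht₀, ht₁⟩, hpt⟩ := hp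
  have hα : 0 < α := hα₀.lt_of_ne fun h => hxp (by simp [← h])
  have hβ : 0 < β := hβ₀.lt_of_ne fun h => hyp (by simp [← h])
  have ha : 0 < (1 - t) * α := mul_pos (by linarith) hα
  have hb : 0 < t * β := mul_pos ht₀ hβ
  have hab : 0 < (1 - t) * α + t * β := add_pos ha hb
  have key : ((1 - t) * α) • x' + (t * β) • y' = ((1 - t) * α + t * β) • p := by
    linear_combination (norm := module) hpt
  convert (convex_convexHull ℝ (C \ {p})) hx' hy' (div_pos ha hab).le (div_pos hb hab).le
    (by field_simp) using 1
  rw [div_eq_inv_mul, div_eq_inv_mul, mul_smul _ ((1 - t) * α), mul_smul _ (t * β), ← smul_add,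
    key, smul_smul, inv_mul_cancel₀ hab.ne', one_smul]

section GeneralPosition

variable {E : Type*} [AddCommGroup E] [Module ℝ E]

def AffineIndepUpTo (n : ℕ) (P : Set E) : Prop :=
  ∀ s : Finset E, ↑s ⊆ P → s.card ≤ n → AffineIndependent ℝ ((↑) : s → E)

theorem affineIndependent_of_forall_sum_eq_zero {s : Finset E}
    (h : ∀ w : E → ℝ, ∑ x ∈ s, w x = 0 → ∑ x ∈ s, w x • x = 0 → ∀ x ∈ s, w x = 0) :
    AffineIndependent ℝ ((↑) : s → E) := by
  by_contra hs
  obtain ⟨w, hw₁, hw₀, x, hx, hwx⟩ := exists_nontrivial_relation_sum_zero_of_not_affine_ind hs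
  exact hwx (h w hw₀ hw₁ x hx)

theorem affineIndepUpTo_of_subsingleton {P : Set E} (hP : P.Subsingleton) (n : ℕ) :
    AffineIndepUpTo n P := fun s hs _ =>
  have : Subsingleton s := ⟨fun x y => Subtype.ext (hP (hs x.2) (hs y.2))⟩
  affineIndependent_of_subsingleton ℝ _

theorem affineIndepUpTo_two (P : Set E) : AffineIndepUpTo 2 P := by
  classical
  intro s _ hs₂
  refine affineIndependent_of_forall_sum_eq_zero fun w hw₀ hw₁ x hx => ?_
  obtain hs₁ | hs₂' := Nat.lt_or_ge s.card 2
  · have := Finset.card_pos.mpr ⟨x, hx⟩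
    obtain ⟨a, rfl⟩ := (Finset.card_eq_one (s := s)).mp (by omega)
    simpa [Finset.mem_singleton.mp hx] using hw₀
  · obtain ⟨a, b, hab, rfl⟩ := Finset.card_eq_two.mp (le_antisymm hs₂ hs₂')
    rw [Finset.sum_pair hab] at hw₀ hw₁
    have hwa : w a = 0 := by
      have : w a • (a - b) = 0 := by
        rw [← hw₁, show w b = -w a by linarith]
        module
      exact (smul_eq_zero.mp this).resolve_right (sub_ne_zero.mpr hab)
    simp only [Finset.mem_insert, Finset.mem_singleton] at hx
    rcases hx with rfl | rfl <;> linarith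

namespace AffineIndepUpTo

variable {n : ℕ} {P : Set E}

theorem affineIndependent (h : AffineIndepUpTo n P) {ι : Type*} [Fintype ι] {f : ι → E}
    (hf : Function.Injective f) (hfP : Set.range f ⊆ P) (hcard : Fintype.card ι ≤ n) :
    AffineIndependent ℝ f := by
  classical
  have hrange : ((Finset.univ.image f : Finset E) : Set E) = Set.range f := by simp
  refine AffineIndependent.of_set_of_injective ?_ hf
  rw [← hrange]
  exact h _ (hrange ▸ hfP) ((Finset.card_image_of_injective _ hf).trans_le hcard)

theorem sum_smul_ne (h : AffineIndepUpTo n P) {ι : Type*} (s : Finset ι) {z : ι → E}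
    (hz : Set.InjOn z s) (hzP : ∀ i ∈ s, z i ∈ P) {p : E} (hp : p ∈ P) (hpz : ∀ i ∈ s, z i ≠ p)
    (hcard : s.card + 1 ≤ n) {w : ι → ℝ} (hw : ∑ i ∈ s, w i = 1) :
    ∑ i ∈ s, w i • z i ≠ p := by
  intro hsum
  let f : Option s → E := fun o => o.elim p (fun i => z i)
  have hf : Function.Injective f := by
    rintro (_ | i) (_ | j) hij
    · rfl
    · exact absurd hij.symm (hpz j j.2)
    · exact absurd hij (hpz i i.2)
    · exact congrArg some (Subtype.ext (hz i.2 j.2 hij))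
  have hind := h.affineIndependent hf
    (Set.range_subset_iff.mpr fun o => o.rec hp fun i => hzP i i.2) (by simpa using hcard)
  have := hind.eq_zero_of_sum_eq_zero (s := Finset.univ)
    (w := fun o => o.elim (-1) (fun i => w i))
    (by simp [Fintype.sum_option, Finset.sum_attach, hw])
    (by
      simp only [f, Fintype.sum_option, Option.elim, Finset.univ_eq_attach]
      rw [Finset.sum_attach s (fun i => w i • z i), hsum, neg_one_smul, neg_add_cancel])
    none (Finset.mem_univ _)
  simp at this

end AffineIndepUpTo

end GeneralPosition

theorem AffineIndepUpTo.eq_zero_of_sum_eq_zero_of_injOn {α F : Type*} [AddCommGroup F]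
    [Module ℝ F] {n : ℕ} {P : Set α} {f : α → F} (h : AffineIndepUpTo n (f '' P))
    (hf : Set.InjOn f P) {s : Finset α} (hsP : ↑s ⊆ P) (hcard : s.card ≤ n) {w : α → ℝ}
    (hw₀ : ∑ x ∈ s, w x = 0) (hw₁ : ∑ x ∈ s, w x • f x = 0) : ∀ x ∈ s, w x = 0 := by
  have hind : AffineIndependent ℝ (fun x : s => f x) :=
    h.affineIndependent (fun x y hxy => Subtype.ext (hf (hsP x.2) (hsP y.2) hxy))
      (Set.range_subset_iff.mpr fun x => ⟨x, hsP x.2, rfl⟩) (by simpa using hcard)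
  intro x hx
  exact hind.eq_zero_of_sum_eq_zero (s := Finset.univ) (w := fun x : s => w x)
    (by rwa [Finset.sum_coe_sort s w]) (by rwa [Finset.sum_coe_sort s (fun x => w x • f x)])
    ⟨x, hx⟩ (Finset.mem_univ _)

section Coordinates

variable {d : ℕ}

def projₗ (d : ℕ) : (ℝ^d) →ₗ[ℝ] ℝ^(d - 1) where
  toFun := proj
  map_add' _ _ := rfl
  map_smul' _ _ := rfl

theorem proj_sum_smul {ι : Type*} (s : Finset ι) (c : ι → ℝ) (v : ι → ℝ^d) :
    proj (∑ i ∈ s, c i • v i) = ∑ i ∈ s, c i • proj (v i) :=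
  (map_sum (projₗ d) _ s).trans (Finset.sum_congr rfl fun i _ => map_smul (projₗ d) (c i) (v i))

theorem hCoord_sum_smul (hd : 0 < d) {ι : Type*} (s : Finset ι) (c : ι → ℝ) (v : ι → ℝ^d) :
    hCoord (∑ i ∈ s, c i • v i) = ∑ i ∈ s, c i * hCoord (v i) := by
  simp [hCoord, hd]

theorem eq_of_proj_eq_of_hCoord_eq (hd : 0 < d) {x y : ℝ^d} (hπ : proj x = proj y)
    (hh : hCoord x = hCoord y) : x = y := by
  ext i
  by_cases hi : (i : ℕ) < d - 1
  · simpa [proj] using congrArg (· ⟨i, hi⟩) hπ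
  · have : i = ⟨d - 1, by omega⟩ := Fin.ext (by simp; omega)
    rw [this]
    simpa [hCoord, hd] using hh

end Coordinates

section Oscillators

variable {d : ℕ} {P : Set (ℝ^d)}

theorem Regular.mono {Q : Set (ℝ^d)} (hP : Regular P) (hQ : Q ⊆ P) : Regular Q :=
  ⟨fun i => (hP.1 i).mono hQ, fun s hs => hP.2.1 s (hs.trans (Set.image_mono hQ)),
    fun S T hS hT => hP.2.2 S T (hS.trans hQ) (hT.trans hQ)⟩

theorem Regular.injOn_proj (hd : 2 ≤ d) (hP : Regular P) : Set.InjOn proj P :=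
  fun a ha b hb hab => hP.1 ⟨0, by omega⟩ ha hb (congrArg (· ⟨0, by omega⟩) hab)

theorem regular_singleton (p : ℝ^d) : Regular {p} := by
  refine ⟨fun _ => Set.injOn_singleton _ _, ?_, ?_⟩
  · rw [Set.image_singleton]
    exact fun s hs _ => affineIndepUpTo_of_subsingleton Set.subsingleton_singleton _ s hs le_rfl
  · rintro S T hS hT hST ⟨a, ha⟩ ⟨b, hb⟩ -
    obtain rfl := hS ha
    obtain rfl := hT hb
    exact absurd hb (Finset.disjoint_left.mp hST ha)

theorem Regular.proj_sum_smul_eq_zero (hP : Regular P) {S T : Finset (ℝ^d)} (hS : ↑S ⊆ P)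
    (hT : ↑T ⊆ P) (hST : Disjoint S T) (hSne : S.Nonempty) (hTne : T.Nonempty)
    (hcard : S.card + T.card = d + 1) {w : ℝ^d → ℝ} (hwS : ∑ x ∈ S, w x = 0)
    (hwT : ∑ x ∈ T, w x = 0) (hw : ∑ x ∈ S, w x • proj x + ∑ x ∈ T, w x • proj x = 0) :
    ∑ x ∈ S, w x • proj x = 0 := by
  refine eq_zero_of_mem_direction_of_existsUnique (hP.2.2 S T hS hT hST hSne hTne hcard) ?_ ?_
  · rw [direction_affineSpan]
    exact sum_smul_mem_vectorSpan_image S proj hwS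
  · rw [direction_affineSpan, eq_neg_of_add_eq_zero_left hw]
    exact Submodule.neg_mem _ (sum_smul_mem_vectorSpan_image T proj hwT)

theorem HighAbove.sum_eq_zero {A B : Set (ℝ^d)} (hAB : HighAbove A B) {S T : Finset (ℝ^d)}
    (hS : ↑S ⊆ A) (hT : ↑T ⊆ B) (hSne : S.Nonempty) (hTne : T.Nonempty)
    (hcard : S.card + T.card = d + 1) {w : ℝ^d → ℝ} (hw₀ : ∑ x ∈ S, w x + ∑ x ∈ T, w x = 0)
    (hw₁ : ∑ x ∈ S, w x • x + ∑ x ∈ T, w x • x = 0) : ∑ x ∈ S, w x = 0 := by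
  by_contra hσ
  set σ := ∑ x ∈ S, w x
  have hσT : ∑ x ∈ T, w x = -σ := eq_neg_of_add_eq_zero_right hw₀
  have hXS : σ⁻¹ • ∑ x ∈ S, w x • x ∈ affineSpan ℝ (S : Set (ℝ^d)) := by
    simpa [Finset.smul_sum, smul_smul, ← Finset.mul_sum, inv_mul_cancel₀ hσ] using
      sum_smul_mem_affineSpan_image S id (w := fun x => σ⁻¹ * w x)
        (by rw [← Finset.mul_sum, inv_mul_cancel₀ hσ])
  have hXT : σ⁻¹ • ∑ x ∈ S, w x • x ∈ affineSpan ℝ (T : Set (ℝ^d)) := by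
    have hneg : -σ ≠ 0 := neg_ne_zero.mpr hσ
    have := sum_smul_mem_affineSpan_image T id (w := fun x => (-σ)⁻¹ * w x)
      (by rw [← Finset.mul_sum, hσT, inv_mul_cancel₀ hneg])
    rw [Set.image_id] at this
    convert this using 1
    simp only [id, ← smul_smul, ← Finset.smul_sum, eq_neg_of_add_eq_zero_right hw₁, inv_neg,
      neg_smul_neg]
  exact lt_irrefl _ (hAB.2.2 S T hS hT hSne hTne hcard _ _ hXS hXT rfl)

theorem proj_sum_smul_eq_zero {s : Finset (ℝ^d)} {w : ℝ^d → ℝ} (hw : ∑ x ∈ s, w x • x = 0) :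
    ∑ x ∈ s, w x • proj x = 0 := by
  rw [← proj_sum_smul, hw]
  exact map_zero (projₗ d)

theorem affineIndepUpTo_union (hd : 2 ≤ d) {A B : Set (ℝ^d)} (hAB : HighAbove A B)
    (hA : AffineIndepUpTo (d + 1) A) (hB : AffineIndepUpTo (d + 1) B)
    (hπ : AffineIndepUpTo d (proj '' (A ∪ B))) : AffineIndepUpTo (d + 1) (A ∪ B) := by
  classical
  have hinj := hAB.2.1.injOn_proj hd
  intro s hs hcard
  refine affineIndependent_of_forall_sum_eq_zero fun w hw₀ hw₁ => ?_
  have hwπ := proj_sum_smul_eq_zero hw₁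
  obtain hlt | hcard := hcard.lt_or_eq
  · exact hπ.eq_zero_of_sum_eq_zero_of_injOn hinj hs (by omega) hw₀ hwπ
  set S := s.filter (· ∈ A)
  set T := s.filter (· ∉ A)
  have hS : ↑S ⊆ A := fun x hx => (Finset.mem_filter.mp hx).2
  have hT : ↑T ⊆ B := fun x hx =>
    ((hs (Finset.mem_filter.mp hx).1).resolve_left (Finset.mem_filter.mp hx).2)
  have hsplit {M : Type} [AddCommMonoid M] (f : ℝ^d → M) :
      ∑ x ∈ S, f x + ∑ x ∈ T, f x = ∑ x ∈ s, f x :=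
    Finset.sum_filter_add_sum_filter_not s _ f
  have hcardST : S.card + T.card = d + 1 := (Finset.card_filter_add_card_filter_not _).trans hcard
  rcases S.eq_empty_or_nonempty with hS0 | hSne
  · refine (hB s (fun x hx => ?_) hcard.le).eq_zero_of_sum_eq_zero_subtype hw₀ hw₁
    exact (hs hx).resolve_left (Finset.filter_eq_empty_iff.mp hS0 hx)
  rcases T.eq_empty_or_nonempty with hT0 | hTne
  · refine (hA s (fun x hx => ?_) hcard.le).eq_zero_of_sum_eq_zero_subtype hw₀ hw₁
    exact not_not.mp (Finset.filter_eq_empty_iff.mp hT0 hx)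
  have hσS : ∑ x ∈ S, w x = 0 := hAB.sum_eq_zero hS hT hSne hTne hcardST
    ((hsplit w).trans hw₀) ((hsplit (fun x => w x • x)).trans hw₁)
  have hσT : ∑ x ∈ T, w x = 0 := by linarith [hsplit w]
  have hSs : ↑S ⊆ A ∪ B := fun x hx => hs (Finset.mem_filter.mp hx).1
  have hTs : ↑T ⊆ A ∪ B := fun x hx => hs (Finset.mem_filter.mp hx).1
  have hvS : ∑ x ∈ S, w x • proj x = 0 := hAB.2.1.proj_sum_smul_eq_zero hSs hTs
    (Finset.disjoint_filter_filter_not _ _ _) hSne hTne hcardST hσS hσT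
    ((hsplit (fun x => w x • proj x)).trans hwπ)
  have hvT : ∑ x ∈ T, w x • proj x = 0 := by
    rw [← hsplit, hvS, zero_add] at hwπ
    exact hwπ
  intro x hx
  by_cases hxA : x ∈ A
  · exact hπ.eq_zero_of_sum_eq_zero_of_injOn hinj hSs
      (by have := hTne.card_pos; omega) hσS hvS x (Finset.mem_filter.mpr ⟨hx, hxA⟩)
  · exact hπ.eq_zero_of_sum_eq_zero_of_injOn hinj hTs
      (by have := hSne.card_pos; omega) hσT hvT x (Finset.mem_filter.mpr ⟨hx, hxA⟩)

theorem modClass_one_union_modClass_two (P : Set (ℝ^d)) : modClass 1 2 P ∪ modClass 2 2 P = P := by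
  ext p
  rcases Nat.mod_two_eq_zero_or_one (rank P p) with h | h <;> simp [modClass, h]

theorem IsOscillator.finite (h : IsOscillator d P) : P.Finite := by
  cases h with
  | single p => exact Set.finite_singleton p
  | dimOne P hfin => exact hfin
  | step P _ hfin => exact hfin

theorem IsOscillator.regular (hd : 2 ≤ d) (h : IsOscillator d P) : Regular P := by
  cases h with
  | single p => exact regular_singleton p
  | dimOne => omega
  | step P _ _ _ hreg => exact hreg

theorem IsOscillator.affineIndepUpTo (h : IsOscillator d P) : AffineIndepUpTo (d + 1) P := by
  induction h with
  | single p => exact affineIndepUpTo_of_subsingleton Set.subsingleton_singleton _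
  | dimOne P => exact affineIndepUpTo_two P
  | @step d P hd _ _ _ _ _ hab _ ih₁ ih₂ ihπ =>
    rw [Nat.sub_add_cancel (by omega : 1 ≤ d), ← modClass_one_union_modClass_two P] at ihπ
    rw [← modClass_one_union_modClass_two P]
    rcases hab with hab | hab
    · exact affineIndepUpTo_union hd hab ih₁ ih₂ ihπ
    · rw [Set.union_comm] at ihπ ⊢
      exact affineIndepUpTo_union hd hab ih₂ ih₁ ihπ

theorem IsOscillator.affineIndepUpTo_proj (hd : 2 ≤ d) (h : IsOscillator d P) :
    AffineIndepUpTo d (proj '' P) := by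
  cases h with
  | single p =>
    rw [Set.image_singleton]
    exact affineIndepUpTo_of_subsingleton Set.subsingleton_singleton _
  | dimOne => omega
  | step P _ _ _ _ _ _ _ hπ =>
    simpa [Nat.sub_add_cancel (by omega : 1 ≤ d)] using hπ.affineIndepUpTo

end Oscillators

section CupsAndCaps

variable {d : ℕ} {P C : Set (ℝ^d)} {p : ℝ^d}

structure IsInterpolation (C : Set (ℝ^d)) (p : ℝ^d) (q : Fin d → ℝ^d) (c : Fin d → ℝ) :
    Prop where
  mem : ∀ i, q i ∈ C
  injective : Function.Injective q
  ne : ∀ i, p ≠ q i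
  mem_Ioo : ∀ i, c i ∈ Set.Ioo (0 : ℝ) 1
  sum_eq_one : ∑ i, c i = 1
  proj_eq : proj p = ∑ i, c i • proj (q i)

theorem IsInterpolation.sum_smul_mem_convexHull {q : Fin d → ℝ^d} {c : Fin d → ℝ}
    (h : IsInterpolation C p q c) : ∑ i, c i • q i ∈ convexHull ℝ (C \ {p}) :=
  (convex_convexHull ℝ _).sum_mem (fun i _ => (h.mem_Ioo i).1.le) h.sum_eq_one
    fun i _ => subset_convexHull ℝ _ ⟨h.mem i, (h.ne i).symm⟩

theorem IsInterpolation.proj_sum_smul {q : Fin d → ℝ^d} {c : Fin d → ℝ}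
    (h : IsInterpolation C p q c) : proj (∑ i, c i • q i) = proj p := by
  rw [_root_.proj_sum_smul, h.proj_eq]

theorem ConvexCup.lt_sum (hC : ConvexCup C) (hp : p ∈ C) {q : Fin d → ℝ^d} {c : Fin d → ℝ}
    (h : IsInterpolation C p q c) : hCoord p < ∑ i, c i * hCoord (q i) :=
  hC.2 p q c hp h.mem h.injective h.ne h.mem_Ioo h.sum_eq_one h.proj_eq

theorem ConvexCap.sum_lt (hC : ConvexCap C) (hp : p ∈ C) {q : Fin d → ℝ^d} {c : Fin d → ℝ}
    (h : IsInterpolation C p q c) : ∑ i, c i * hCoord (q i) < hCoord p :=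
  hC.2 p q c hp h.mem h.injective h.ne h.mem_Ioo h.sum_eq_one h.proj_eq

theorem exists_simplex_of_mem_convexHull_sdiff (hP : AffineIndepUpTo (d + 1) P) (hCP : C ⊆ P)
    (hp : p ∈ P) (hmem : p ∈ convexHull ℝ (C \ {p})) :
    ∃ (z : Fin (d + 1) → ℝ^d) (w : Fin (d + 1) → ℝ), AffineIndependent ℝ z ∧
      (∀ i, z i ∈ C \ {p}) ∧ (∀ i, 0 < w i) ∧ ∑ i, w i = 1 ∧ ∑ i, w i • z i = p := by
  obtain ⟨ι, _, z, w, hzC, hz, hw, hw₁, hwp⟩ := eq_pos_convex_span_of_mem_convexHull hmem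
  have hcard : Fintype.card ι = d + 1 := by
    refine le_antisymm ?_ (not_lt.mp fun hlt => ?_)
    · simpa using hz.card_le_finrank_succ.trans
        (Nat.add_le_add_right (Submodule.finrank_le _) 1)
    · exact hP.sum_smul_ne Finset.univ hz.injective.injOn (fun i _ => hCP (hzC ⟨i, rfl⟩).1)
        hp (fun i _ => (hzC ⟨i, rfl⟩).2) (by simp; omega) hw₁ hwp
  let e := (Fintype.equivFinOfCardEq hcard).symm
  exact ⟨z ∘ e, w ∘ e, (affineIndependent_equiv e).mpr hz, fun i => hzC ⟨e i, rfl⟩,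
    fun i => hw _, (e.sum_comp w).trans hw₁, (e.sum_comp (fun i => w i • z i)).trans hwp⟩

theorem exists_interpolation_of_weights (hd : 2 ≤ d) (hπP : AffineIndepUpTo d (proj '' P))
    (hinj : Set.InjOn proj P) (hCP : C ⊆ P) (hp : p ∈ P) {z : Fin (d + 1) → ℝ^d}
    (hz : Function.Injective z) (hzC : ∀ i, z i ∈ C \ {p}) {c : Fin (d + 1) → ℝ}
    (hc : ∀ i, 0 ≤ c i) {i₀ : Fin (d + 1)} (hci₀ : c i₀ = 0) (hc₁ : ∑ i, c i = 1)
    (hcπ : ∑ i, c i • proj (z i) = proj p) :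
    ∃ q c', IsInterpolation C p q c' ∧ ∑ i, c' i * hCoord (q i) = ∑ i, c i * hCoord (z i) := by
  classical
  have hsum {M : Type} [AddCommMonoid M] (f : Fin (d + 1) → M) (hf : f i₀ = 0) :
      ∑ k, f (i₀.succAbove k) = ∑ i, f i := by
    rw [Fin.sum_univ_succAbove f i₀, hf, zero_add]
  have hpos : ∀ k, 0 < c (i₀.succAbove k) := by
    intro k
    -- otherwise `π p` is an affine combination of at most `d - 1` other points of `π P`
    refine (hc _).lt_of_ne fun hck => ?_
    set s := Finset.univ.filter (fun i => c i ≠ 0)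
    have hs : s ⊆ Finset.univ \ {i₀, i₀.succAbove k} := fun i hi => by
      simp only [s, Finset.mem_filter] at hi
      simp only [Finset.mem_sdiff, Finset.mem_insert, Finset.mem_singleton]
      refine ⟨Finset.mem_univ _, ?_⟩
      rintro (rfl | rfl) <;> simp_all
    have hscard : s.card + 1 ≤ d := by
      have := Finset.card_le_card hs
      rw [Finset.card_sdiff, Finset.inter_univ, Finset.card_pair (Fin.succAbove_ne i₀ k).symm,
        Finset.card_univ, Fintype.card_fin] at this
      omega
    refine hπP.sum_smul_ne s (z := fun i => proj (z i))
      (fun i _ j _ h => hz (hinj (hCP (hzC i).1) (hCP (hzC j).1) h))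
      (fun i _ => Set.mem_image_of_mem proj (hCP (hzC i).1)) (Set.mem_image_of_mem proj hp)
      (fun i _ h => (hzC i).2 (hinj (hCP (hzC i).1) hp h)) hscard
      ((Finset.sum_filter_ne_zero _).trans hc₁) ?_
    rw [Finset.sum_filter_of_ne fun i _ h => left_ne_zero_of_smul h, hcπ]
  have hlt : ∀ k, c (i₀.succAbove k) < 1 := by
    intro k
    have : Nontrivial (Fin d) := Fin.nontrivial_iff_two_le.mpr hd
    obtain ⟨l, hl⟩ := exists_ne k
    have := Finset.sum_le_sum_of_subset_of_nonneg (Finset.subset_univ {k, l})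
      (fun i _ _ => (hpos i).le)
    rw [Finset.sum_pair hl.symm, hsum c hci₀, hc₁] at this
    linarith [hpos l]
  refine ⟨fun k => z (i₀.succAbove k), fun k => c (i₀.succAbove k),
    ⟨fun k => (hzC _).1, hz.comp Fin.succAbove_right_injective, fun k h => (hzC _).2 h.symm,
      fun k => ⟨hpos k, hlt k⟩, (hsum c hci₀).trans hc₁, ?_⟩,
    hsum (fun i => c i * hCoord (z i)) (by simp [hci₀])⟩
  exact ((hsum (fun i => c i • proj (z i)) (by simp [hci₀])).trans hcπ).symm

theorem exists_interpolation_lt_and_gt (hd : 2 ≤ d) (hP : AffineIndepUpTo (d + 1) P)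
    (hπP : AffineIndepUpTo d (proj '' P)) (hinj : Set.InjOn proj P) (hCP : C ⊆ P) (hp : p ∈ P)
    (hmem : p ∈ convexHull ℝ (C \ {p})) :
    (∃ q c, IsInterpolation C p q c ∧ ∑ i, c i * hCoord (q i) < hCoord p) ∧
      (∃ q c, IsInterpolation C p q c ∧ hCoord p < ∑ i, c i * hCoord (q i)) := by
  obtain ⟨z, w, hz, hzC, hw, hw₁, hwp⟩ := exists_simplex_of_mem_convexHull_sdiff hP hCP hp hmem
  obtain ⟨b, hb₀, hbπ, i, hi⟩ :
      ∃ b : Fin (d + 1) → ℝ, ∑ i, b i = 0 ∧ ∑ i, b i • proj (z i) = 0 ∧ ∃ i, b i ≠ 0 := by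
    have : ¬ AffineIndependent ℝ (fun i => proj (z i)) := fun h => by
      have := h.card_le_finrank_succ.trans (Nat.add_le_add_right (Submodule.finrank_le _) 1)
      simp at this
      omega
    simp only [affineIndependent_iff_of_fintype, not_forall] at this
    obtain ⟨b, hb₀, hbπ, i, hi⟩ := this
    exact ⟨b, hb₀, by rwa [Finset.univ.weightedVSub_eq_linear_combination hb₀] at hbπ, i, hi⟩
  have hB : ∑ i, b i * hCoord (z i) ≠ 0 := fun hB => hi <| hz.eq_zero_of_sum_eq_zero
    (s := Finset.univ) hb₀ (eq_of_proj_eq_of_hCoord_eq (by omega)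
      (by rw [proj_sum_smul, hbπ]; exact (map_zero (projₗ d)).symm)
      (by rw [hCoord_sum_smul (by omega), hB]; simp [hCoord])) i (Finset.mem_univ i)
  -- Moving the weights of `p` along `b'` keeps `π p` fixed and changes the interpolated height
  -- at the rate `∑ b' i * hCoord (z i)`; stop when the first weight vanishes.
  have walk (b' : Fin (d + 1) → ℝ) (hb'₀ : ∑ i, b' i = 0) (hb'π : ∑ i, b' i • proj (z i) = 0)
      (hb' : ∃ i, b' i ≠ 0) : ∃ t > 0, ∃ q c, IsInterpolation C p q c ∧
        ∑ i, c i * hCoord (q i) = hCoord p - t * ∑ i, b' i * hCoord (z i) := by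
    obtain ⟨t, ht, i₀, hnn, hi₀⟩ := exists_sub_mul_nonneg_eq_zero hw hb'₀ hb'
    obtain ⟨q, c, hqc, hval⟩ := exists_interpolation_of_weights hd hπP hinj hCP hp
      hz.injective hzC hnn hi₀
      (by simp [Finset.sum_sub_distrib, ← Finset.mul_sum, hw₁, hb'₀])
      (by simp [sub_smul, Finset.sum_sub_distrib, mul_smul, ← Finset.smul_sum, hb'π,
        ← proj_sum_smul, hwp])
    refine ⟨t, ht, q, c, hqc, hval.trans ?_⟩
    simp [sub_mul, Finset.sum_sub_distrib, mul_assoc, ← Finset.mul_sum,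
      ← hCoord_sum_smul (by omega : 0 < d), hwp]
  obtain ⟨t₁, ht₁, q₁, c₁, h₁, hv₁⟩ := walk b hb₀ hbπ ⟨i, hi⟩
  obtain ⟨t₂, ht₂, q₂, c₂, h₂, hv₂⟩ := walk (-b) (by simp [hb₀]) (by simp [hbπ]) ⟨i, by simpa⟩
  simp only [Pi.neg_apply, neg_mul, Finset.sum_neg_distrib] at hv₂
  rcases hB.lt_or_gt with hB | hB
  · exact ⟨⟨q₂, c₂, h₂, by rw [hv₂]; nlinarith⟩, ⟨q₁, c₁, h₁, by rw [hv₁]; nlinarith⟩⟩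
  · exact ⟨⟨q₁, c₁, h₁, by rw [hv₁]; nlinarith⟩, ⟨q₂, c₂, h₂, by rw [hv₂]; nlinarith⟩⟩

theorem IsOscillator.convIndep_of_convexCup_or_convexCap (hd : 2 ≤ d) (hP : IsOscillator d P)
    (hCP : C ⊆ P) (hC : ConvexCup C ∨ ConvexCap C) : ConvIndep C := by
  refine ⟨fun s hs hcard => hP.affineIndepUpTo s (hs.trans hCP) hcard.le, fun p hp hmem => ?_⟩
  obtain ⟨⟨q, c, hqc, hlt⟩, ⟨q', c', hqc', hgt⟩⟩ := exists_interpolation_lt_and_gt hd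
    hP.affineIndepUpTo (hP.affineIndepUpTo_proj hd) ((hP.regular hd).injOn_proj hd) hCP (hCP hp)
    hmem
  rcases hC with hC | hC
  · exact (hC.lt_sum hp hqc).asymm hlt
  · exact (hC.sum_lt hp hqc').asymm hgt

end CupsAndCaps

section LowerAndUpperParts

variable {d : ℕ} {C : Set (ℝ^d)}

def lowerPart (C : Set (ℝ^d)) : Set (ℝ^d) :=
  {p ∈ C | ∀ x ∈ convexHull ℝ C, proj x = proj p → hCoord p ≤ hCoord x}

def upperPart (C : Set (ℝ^d)) : Set (ℝ^d) :=
  {p ∈ C | ∀ x ∈ convexHull ℝ C, proj x = proj p → hCoord x ≤ hCoord p}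

theorem lowerPart_subset : lowerPart C ⊆ C := Set.sep_subset _ _

theorem upperPart_subset : upperPart C ⊆ C := Set.sep_subset _ _

theorem subset_lowerPart_union_upperPart (hd : 0 < d)
    (hC : ∀ p ∈ C, p ∉ convexHull ℝ (C \ {p})) : C ⊆ lowerPart C ∪ upperPart C := by
  intro p hp
  by_contra h
  simp only [Set.mem_union, lowerPart, upperPart, Set.mem_sep_iff, not_or, not_and, not_forall,
    not_le] at h
  obtain ⟨x, hx, hxπ, hxh⟩ := h.1 hp
  obtain ⟨y, hy, hyπ, hyh⟩ := h.2 hp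
  have hxy : 0 < hCoord y - hCoord x := by linarith
  set t := (hCoord p - hCoord x) / (hCoord y - hCoord x)
  have ht₀ : 0 < t := div_pos (by linarith) hxy
  have ht₁ : t < 1 := (div_lt_one hxy).mpr (by linarith)
  refine hC p hp (mem_convexHull_sdiff_of_mem_openSegment hx hy (fun h => hxh.ne (h ▸ rfl))
    (fun h => hyh.ne' (h ▸ rfl)) ⟨1 - t, t, by linarith, ht₀, by ring, ?_⟩)
  refine eq_of_proj_eq_of_hCoord_eq hd ?_ ?_
  · change projₗ d _ = _
    rw [map_add, map_smul, map_smul]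
    change (1 - t) • proj x + t • proj y = proj p
    rw [hxπ, hyπ, ← add_smul, sub_add_cancel, one_smul]
  · have : hCoord ((1 - t) • x + t • y) = (1 - t) * hCoord x + t * hCoord y := by
      simp [hCoord, hd]
    have ht : t * (hCoord y - hCoord x) = hCoord p - hCoord x := div_mul_cancel₀ _ hxy.ne'
    rw [this]
    linarith

theorem convexCup_of_subset_lowerPart (hd : 0 < d) {C' : Set (ℝ^d)} (hreg : Regular C')
    (hC : ∀ p ∈ C, p ∉ convexHull ℝ (C \ {p})) (hC' : C' ⊆ lowerPart C) : ConvexCup C' := by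
  refine ⟨hreg, fun p q c hp hq hqinj hpq hc hc₁ hπ => ?_⟩
  have h : IsInterpolation C' p q c := ⟨hq, hqinj, hpq, hc, hc₁, hπ⟩
  have hz := convexHull_mono (Set.sdiff_subset_sdiff_left fun x hx => (hC' hx).1)
    h.sum_smul_mem_convexHull
  rw [← hCoord_sum_smul hd]
  refine ((hC' hp).2 _ (convexHull_mono Set.sdiff_subset hz) h.proj_sum_smul).lt_of_ne
    fun heq => ?_
  rw [eq_of_proj_eq_of_hCoord_eq hd h.proj_sum_smul heq.symm] at hz
  exact hC p (hC' hp).1 hz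

theorem convexCap_of_subset_upperPart (hd : 0 < d) {C' : Set (ℝ^d)} (hreg : Regular C')
    (hC : ∀ p ∈ C, p ∉ convexHull ℝ (C \ {p})) (hC' : C' ⊆ upperPart C) : ConvexCap C' := by
  refine ⟨hreg, fun p q c hp hq hqinj hpq hc hc₁ hπ => ?_⟩
  have h : IsInterpolation C' p q c := ⟨hq, hqinj, hpq, hc, hc₁, hπ⟩
  have hz := convexHull_mono (Set.sdiff_subset_sdiff_left fun x hx => (hC' hx).1)
    h.sum_smul_mem_convexHull
  rw [← hCoord_sum_smul hd]
  refine ((hC' hp).2 _ (convexHull_mono Set.sdiff_subset hz) h.proj_sum_smul).lt_of_ne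
    fun heq => ?_
  rw [eq_of_proj_eq_of_hCoord_eq hd h.proj_sum_smul heq] at hz
  exact hC p (hC' hp).1 hz

theorem exists_convexCup_or_convexCap_subset (hd : 0 < d) (hfin : C.Finite) (hreg : Regular C)
    (hC : ∀ p ∈ C, p ∉ convexHull ℝ (C \ {p})) :
    ∃ C' ⊆ C, (ConvexCup C' ∨ ConvexCap C') ∧ C'.ncard = (C.ncard + 1) / 2 := by
  have hcard : C.ncard ≤ (lowerPart C).ncard + (upperPart C).ncard :=
    (Set.ncard_le_ncard (subset_lowerPart_union_upperPart hd hC)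
      ((hfin.subset lowerPart_subset).union (hfin.subset upperPart_subset))).trans
      (Set.ncard_union_le _ _)
  by_cases hlow : (C.ncard + 1) / 2 ≤ (lowerPart C).ncard
  · obtain ⟨C', hC'C, hC'card⟩ := Set.exists_subset_card_eq hlow
    exact ⟨C', hC'C.trans lowerPart_subset,
      Or.inl (convexCup_of_subset_lowerPart hd (hreg.mono (hC'C.trans lowerPart_subset)) hC hC'C),
      hC'card⟩
  · obtain ⟨C', hC'C, hC'card⟩ :=
      Set.exists_subset_card_eq (show (C.ncard + 1) / 2 ≤ (upperPart C).ncard by omega)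
    exact ⟨C', hC'C.trans upperPart_subset,
      Or.inr (convexCap_of_subset_upperPart hd (hreg.mono (hC'C.trans upperPart_subset)) hC hC'C),
      hC'card⟩

end LowerAndUpperParts

theorem stretch_mono {d : ℕ} {P C C' : Set (ℝ^d)} (hC : C.Finite) (h : C' ⊆ C) :
    stretch P C' ≤ stretch P C := by
  rcases C'.eq_empty_or_nonempty with rfl | hne
  · simp [stretch]
  have hsup := csSup_le_csSup (hC.image (rank P)).bddAbove (hne.image _) (Set.image_mono h)
  have hinf := csInf_le_csInf (OrderBot.bddBelow _) (hne.image (rank P)) (Set.image_mono h)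
  unfold stretch
  omega

theorem stmt14_general (d k : ℕ) (hd : 2 ≤ d) :
    Delta' d ((k + 1) / 2) ≤ Delta d k ∧ Delta d k ≤ Delta' d k := by
  constructor
  · refine le_sInf ?_
    rintro _ ⟨P, C, hP, hCP, hC, rfl, rfl⟩
    obtain ⟨C', hC'C, hC', hcard⟩ := exists_convexCup_or_convexCap_subset (by omega)
      (hP.finite.subset hCP) ((hP.regular hd).mono hCP) hC.2
    calc Delta' d ((C.ncard + 1) / 2) ≤ stretch P C' :=
          sInf_le ⟨P, C', hP, hC'C.trans hCP, hC', hcard, rfl⟩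
      _ ≤ stretch P C := by exact_mod_cast stretch_mono (hP.finite.subset hCP) hC'C
  · refine le_sInf ?_
    rintro _ ⟨P, C, hP, hCP, hC, rfl, rfl⟩
    exact sInf_le ⟨P, C, hP, hCP, hP.convIndep_of_convexCup_or_convexCap hd hCP hC, rfl, rfl⟩

theorem stmt14 (d k : ℕ) (hd : 2 ≤ d) (hk : 1 ≤ k) :
    Delta' d ((k + 1) / 2) ≤ Delta d k ∧ Delta d k ≤ Delta' d k :=
  stmt14_general d k hd
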